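/- arXiv:1208.2072 — 3 statements merged into one kernel-verified Lean document; each statement's English description precedes it below -/
import Mathlib

section
/- Let (X, μ) and (Y, ν) be σ-finite measure spaces and 1 < p < ∞ with conjugate exponent p′ (1/p + 1/p′ = 1). For functions a on X and b on Y write a ⊗ b for the function (x, y) ↦ a(x) b(y) on X × Y. Then for every bounded linear operator T on L^p(μ × ν), every ε > 0, and all finite collections ζ_1, …, ζ_m ∈ L^{p′}(μ × ν) and η_1, …, η_m ∈ L^p(μ × ν), there exist n ∈ ℕ and functions a_i ∈ L^{p′}(X, μ), b_i ∈ L^{p′}(Y, ν), c_i ∈ L^p(X, μ), d_i ∈ L^p(Y, ν) (1 ≤ i ≤ n) such that for every l = 1, …, m one has | ∫_{X×Y} ζ_l · (T η_l) d(μ×ν) − Σ_{i=1}^n ( ∫_{X×Y} (a_i ⊗ b_i) · η_l d(μ×ν) ) · ( ∫_{X×Y} ζ_l · (c_i ⊗ d_i) d(μ×ν) ) | < ε. -/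
/-!
The approximation is in fact an exact identity. Pairing against indicators of finite-measure
rectangles, which generate the product σ-algebra, determines an element of `L^q(μ × ν)`, so the
elementary tensors `a ⊗ b ∈ L^{q'}` separate the points of `L^q`. On a finite-dimensional subspace
every linear functional is therefore the pairing with a finite sum of elementary tensors. Applied to
the coordinate functionals of a basis `(e_k)` of `span η`, and to the functionals `f ↦ ∫ f · T e_k`
on `span ζ`, this gives `∫ ζ_l · T η_l = Σ_k ⟨w_k, η_l⟩ ⟨ζ_l, g_k⟩` with `w_k`, `g_k` finite sums
of elementary tensors, and expanding these sums yields the rank-one terms.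
-/

open MeasureTheory Set
open scoped ENNReal

namespace MeasureTheory

section Pairing

variable {α : Type*} [MeasurableSpace α] (M : Measure α) (q' q : ℝ≥0∞)
  [Fact (1 ≤ q')] [Fact (1 ≤ q)] [ENNReal.HolderConjugate q' q]

noncomputable abbrev mulPairing : Lp ℂ q' M →L[ℂ] Lp ℂ q M →L[ℂ] ℂ :=
  (ContinuousLinearMap.mul ℂ ℂ).lpPairing M q' q

variable {M q' q}

theorem mulPairing_apply (w : Lp ℂ q' M) (u : Lp ℂ q M) :
    mulPairing M q' q w u = ∫ x, w x * u x ∂M :=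
  (ContinuousLinearMap.mul ℂ ℂ).lpPairing_eq_integral w u

end Pairing

variable {X Y : Type*} [MeasurableSpace X] [MeasurableSpace Y]

section Separation

variable {E : Type*} [NormedAddCommGroup E] [NormedSpace ℝ E] [CompleteSpace E]

theorem ae_eq_zero_of_forall_setIntegral_prod_eq_zero {ρ : Measure (X × Y)} {f : X × Y → E}
    (hf : Integrable f ρ)
    (h : ∀ A B, MeasurableSet A → MeasurableSet B → ∫ z in A ×ˢ B, f z ∂ρ = 0) :
    f =ᵐ[ρ] 0 := by
  refine hf.ae_eq_of_withDensityᵥ_eq (integrable_zero _ _ _) ?_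
  have hrect : ∀ s ∈ image2 (· ×ˢ ·) {A : Set X | MeasurableSet A} {B : Set Y | MeasurableSet B},
      ρ.withDensityᵥ f s = ρ.withDensityᵥ 0 s := by
    rintro _ ⟨A, hA, B, hB, rfl⟩
    rw [withDensityᵥ_apply hf (hA.prod hB), withDensityᵥ_zero, h A B hA hB]
    rfl
  exact VectorMeasure.ext_of_generateFrom _ hrect generateFrom_prod.symm isPiSystem_prod
    (by simpa using hrect _ ⟨univ, .univ, univ, .univ, univ_prod_univ⟩)

theorem Lp.eq_zero_of_forall_setIntegral_prod_eq_zero {μ : Measure X} {ν : Measure Y}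
    [SigmaFinite μ] [SigmaFinite ν] {q : ℝ≥0∞} [Fact (1 ≤ q)] (u : Lp E q (μ.prod ν))
    (h : ∀ A B, MeasurableSet A → MeasurableSet B → μ A < ∞ → ν B < ∞ →
      ∫ z in A ×ˢ B, u z ∂(μ.prod ν) = 0) :
    u = 0 := by
  set S := spanningSets μ
  set S' := spanningSets ν
  have hrestrict : ∀ n, u =ᵐ[(μ.prod ν).restrict (S n ×ˢ S' n)] 0 := by
    intro n
    have : IsFiniteMeasure ((μ.prod ν).restrict (S n ×ˢ S' n)) :=
      isFiniteMeasure_restrict.2 <| by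
        rw [Measure.prod_prod]
        exact ENNReal.mul_ne_top (measure_spanningSets_lt_top μ n).ne
          (measure_spanningSets_lt_top ν n).ne
    refine ae_eq_zero_of_forall_setIntegral_prod_eq_zero
      (((Lp.memLp u).restrict _).integrable Fact.out) fun A B hA hB => ?_
    rw [Measure.restrict_restrict (hA.prod hB), prod_inter_prod]
    exact h _ _ (hA.inter (measurableSet_spanningSets μ n))
      (hB.inter (measurableSet_spanningSets ν n))
      ((measure_mono inter_subset_right).trans_lt (measure_spanningSets_lt_top μ n))
      ((measure_mono inter_subset_right).trans_lt (measure_spanningSets_lt_top ν n))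
  have hcover : ⋃ n, S n ×ˢ S' n = univ := by
    rw [iUnion_prod_of_monotone (monotone_spanningSets μ) (monotone_spanningSets ν),
      iUnion_spanningSets, iUnion_spanningSets, univ_prod_univ]
  have := (ae_restrict_iUnion_iff _ _).2 hrestrict
  rw [hcover, Measure.restrict_univ] at this
  exact Lp.eq_zero_iff_ae_eq_zero.2 this

end Separation

variable (μ : Measure X) (ν : Measure Y) in
def elementaryTensors (q : ℝ≥0∞) : Set (Lp ℂ q (μ.prod ν)) :=
  {w | ∃ (a : Lp ℂ q μ) (b : Lp ℂ q ν), w =ᵐ[μ.prod ν] fun z => a z.1 * b z.2}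

variable {μ : Measure X} {ν : Measure Y}

theorem indicatorConstLp_prod_mem_elementaryTensors {q : ℝ≥0∞} [Fact (1 ≤ q)]
    {A : Set X} {B : Set Y} (hA : MeasurableSet A) (hB : MeasurableSet B)
    (hμA : μ A ≠ ∞) (hνB : ν B ≠ ∞) (hAB : μ.prod ν (A ×ˢ B) ≠ ∞) :
    indicatorConstLp q (hA.prod hB) hAB (1 : ℂ) ∈ elementaryTensors μ ν q := by
  refine ⟨indicatorConstLp q hA hμA 1, indicatorConstLp q hB hνB 1, ?_⟩
  filter_upwards [indicatorConstLp_coeFn (hs := hA.prod hB) (hμs := hAB) (c := (1 : ℂ)),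
    Measure.quasiMeasurePreserving_fst.ae_eq_comp
      (indicatorConstLp_coeFn (p := q) (hs := hA) (hμs := hμA) (c := (1 : ℂ))),
    Measure.quasiMeasurePreserving_snd.ae_eq_comp
      (indicatorConstLp_coeFn (p := q) (hs := hB) (hμs := hνB) (c := (1 : ℂ)))]
    with z hz hz₁ hz₂
  simp only [Function.comp_apply] at hz₁ hz₂
  rw [hz, hz₁, hz₂]
  exact indicator_prod_one

section Conjugate

variable {q' q : ℝ≥0∞} [Fact (1 ≤ q')] [Fact (1 ≤ q)] [ENNReal.HolderConjugate q' q]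

theorem Lp.eq_zero_of_forall_mulPairing_elementaryTensors_eq_zero [SigmaFinite μ] [SigmaFinite ν]
    (u : Lp ℂ q (μ.prod ν))
    (h : ∀ w ∈ elementaryTensors μ ν q', mulPairing (μ.prod ν) q' q w u = 0) :
    u = 0 := by
  refine Lp.eq_zero_of_forall_setIntegral_prod_eq_zero u fun A B hA hB hμA hνB => ?_
  have hAB : μ.prod ν (A ×ˢ B) ≠ ∞ := by
    rw [Measure.prod_prod]
    exact ENNReal.mul_ne_top hμA.ne hνB.ne
  rw [← h _ (indicatorConstLp_prod_mem_elementaryTensors hA hB hμA.ne hνB.ne hAB),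
    mulPairing_apply, ← integral_indicator (hA.prod hB)]
  refine integral_congr_ae ?_
  filter_upwards [indicatorConstLp_coeFn (hs := hA.prod hB) (hμs := hAB) (c := (1 : ℂ))]
    with z hz
  rw [hz, ← Set.indicator_mul_left]
  simp only [one_mul]

theorem exists_mem_span_elementaryTensors_mulPairing_eq [SigmaFinite μ] [SigmaFinite ν]
    (E : Submodule ℂ (Lp ℂ q (μ.prod ν))) [FiniteDimensional ℂ E] (φ : Module.Dual ℂ E) :
    ∃ w ∈ Submodule.span ℂ (elementaryTensors μ ν q'),
      ∀ u : E, mulPairing (μ.prod ν) q' q w u = φ u := by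
  set L : Lp ℂ q' (μ.prod ν) →ₗ[ℂ] Module.Dual ℂ E :=
    (mulPairing (μ.prod ν) q' q).toLinearMap₁₂.compl₂ E.subtype
  set S := (Submodule.span ℂ (elementaryTensors μ ν q')).map L
  have hS : S.dualCoannihilator = ⊥ := by
    refine (Submodule.eq_bot_iff _).2 fun u hu => Subtype.ext ?_
    exact Lp.eq_zero_of_forall_mulPairing_elementaryTensors_eq_zero (u : Lp ℂ q (μ.prod ν))
      fun w hw => (Submodule.mem_dualCoannihilator u).1 hu (L w)
        (Submodule.mem_map_of_mem (Submodule.subset_span hw))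
  have hS_top : S = ⊤ := by
    rw [← Subspace.dualCoannihilator_dualAnnihilator_eq (W := S), hS,
      Submodule.dualAnnihilator_bot]
  obtain ⟨w, hw, hwφ⟩ := Submodule.mem_map.1 (hS_top ▸ Submodule.mem_top : φ ∈ S)
  exact ⟨w, hw, fun u => LinearMap.congr_fun hwφ u⟩

theorem exists_sum_of_mem_span_elementaryTensors
    {w : Lp ℂ q' (μ.prod ν)} (hw : w ∈ Submodule.span ℂ (elementaryTensors μ ν q')) :
    ∃ (n : ℕ) (a : Fin n → Lp ℂ q' μ) (b : Fin n → Lp ℂ q' ν), ∀ u : Lp ℂ q (μ.prod ν),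
      mulPairing (μ.prod ν) q' q w u = ∑ i, ∫ z, (a i z.1 * b i z.2) * u z ∂(μ.prod ν) := by
  obtain ⟨n, r, t, rfl⟩ := Submodule.mem_span_set'.1 hw
  choose a b hab using fun i => (t i).2
  refine ⟨n, fun i => r i • a i, b, fun u => ?_⟩
  simp only [map_sum, map_smul, FunLike.coe_sum, Finset.sum_apply,
    FunLike.coe_smul, Pi.smul_apply, smul_eq_mul, mulPairing_apply]
  refine Finset.sum_congr rfl fun i _ => ?_
  rw [← integral_const_mul]
  refine integral_congr_ae ?_
  filter_upwards [hab i,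
    Measure.quasiMeasurePreserving_fst.ae_eq_comp (Lp.coeFn_smul (r i) (a i))] with z hz hz₁
  simp only [Function.comp_apply, Pi.smul_apply, smul_eq_mul] at hz₁
  rw [hz, hz₁]
  ring

end Conjugate

theorem exists_elementaryTensor_sum_eq_integral_mul_apply [SigmaFinite μ] [SigmaFinite ν]
    {p p' : ℝ≥0∞} [Fact (1 ≤ p)] [Fact (1 ≤ p')] [ENNReal.HolderConjugate p p']
    (T : Lp ℂ p (μ.prod ν) →L[ℂ] Lp ℂ p (μ.prod ν)) {m : ℕ}
    (ζ : Fin m → Lp ℂ p' (μ.prod ν)) (η : Fin m → Lp ℂ p (μ.prod ν)) :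
    ∃ (n : ℕ) (a : Fin n → Lp ℂ p' μ) (b : Fin n → Lp ℂ p' ν)
      (c : Fin n → Lp ℂ p μ) (d : Fin n → Lp ℂ p ν), ∀ l,
      ∫ z, ζ l z * T (η l) z ∂(μ.prod ν) =
        ∑ i, (∫ z, (a i z.1 * b i z.2) * η l z ∂(μ.prod ν)) *
          ∫ z, ζ l z * (c i z.1 * d i z.2) ∂(μ.prod ν) := by
  set E := Submodule.span ℂ (range η)
  set F := Submodule.span ℂ (range ζ)
  have : FiniteDimensional ℂ E := .span_of_finite ℂ (finite_range η)
  have : FiniteDimensional ℂ F := .span_of_finite ℂ (finite_range ζ)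
  let e := Module.finBasis ℂ E
  choose w hw hw_coord using fun k =>
    exists_mem_span_elementaryTensors_mulPairing_eq (q' := p') E (e.coord k)
  choose g hg hg_apply using fun k =>
    exists_mem_span_elementaryTensors_mulPairing_eq (q' := p) F
      ((mulPairing (μ.prod ν) p' p).flip (T (e k)) ∘ₗ F.subtype)
  have hpair : ∀ l, ∫ z, ζ l z * T (η l) z ∂(μ.prod ν) =
      ∑ k, mulPairing (μ.prod ν) p' p (w k) (η l) * mulPairing (μ.prod ν) p p' (g k) (ζ l) := by
    intro l
    have hηl : η l ∈ E := Submodule.subset_span (mem_range_self l)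
    have hζl : ζ l ∈ F := Submodule.subset_span (mem_range_self l)
    have hexpand : η l = ∑ k, e.repr ⟨η l, hηl⟩ k • (e k : Lp ℂ p (μ.prod ν)) := by
      have := congrArg E.subtype (e.sum_repr ⟨η l, hηl⟩)
      rw [map_sum] at this
      exact this.symm
    calc ∫ z, ζ l z * T (η l) z ∂(μ.prod ν)
        = mulPairing (μ.prod ν) p' p (ζ l) (T (η l)) := (mulPairing_apply _ _).symm
      _ = ∑ k, e.repr ⟨η l, hηl⟩ k * mulPairing (μ.prod ν) p' p (ζ l) (T (e k)) := by
        conv_lhs => rw [hexpand]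
        simp only [map_sum, map_smul, smul_eq_mul]
      _ = _ := by
        refine Finset.sum_congr rfl fun k _ => ?_
        rw [hw_coord k ⟨η l, hηl⟩, hg_apply k ⟨ζ l, hζl⟩]
        rfl
  choose na a b hab using fun k => exists_sum_of_mem_span_elementaryTensors (q := p) (hw k)
  choose nc c d hcd using fun k => exists_sum_of_mem_span_elementaryTensors (q := p') (hg k)
  let σ := (Fintype.equivFin (Σ k, Fin (na k) × Fin (nc k))).symm
  refine ⟨_, fun i => a (σ i).1 (σ i).2.1, fun i => b (σ i).1 (σ i).2.1,
    fun i => c (σ i).1 (σ i).2.2, fun i => d (σ i).1 (σ i).2.2, fun l => ?_⟩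
  let A : (Σ k, Fin (na k) × Fin (nc k)) → ℂ := fun x =>
    (∫ z, (a x.1 x.2.1 z.1 * b x.1 x.2.1 z.2) * η l z ∂(μ.prod ν)) *
      ∫ z, ζ l z * (c x.1 x.2.2 z.1 * d x.1 x.2.2 z.2) ∂(μ.prod ν)
  rw [hpair l, Fintype.sum_equiv σ _ A fun _ => rfl, Fintype.sum_sigma]
  refine Finset.sum_congr rfl fun k _ => ?_
  simp only [A, hab, hcd, Finset.sum_mul_sum, Fintype.sum_prod_type, mul_comm (ζ l _)]

end MeasureTheory

theorem stmt_2_general {X Y : Type*} [MeasurableSpace X] [MeasurableSpace Y]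
    (μ : Measure X) (ν : Measure Y) [SigmaFinite μ] [SigmaFinite ν]
    (p p' : ℝ≥0∞) [Fact (1 ≤ p)]
    (hpp' : 1 / p + 1 / p' = 1)
    (T : Lp ℂ p (μ.prod ν) →L[ℂ] Lp ℂ p (μ.prod ν))
    (ε : ℝ) (hε : 0 < ε) (m : ℕ)
    (ζ : Fin m → Lp ℂ p' (μ.prod ν)) (η : Fin m → Lp ℂ p (μ.prod ν)) :
    ∃ (n : ℕ) (a : Fin n → Lp ℂ p' μ) (b : Fin n → Lp ℂ p' ν)
      (c : Fin n → Lp ℂ p μ) (d : Fin n → Lp ℂ p ν),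
      ∀ l : Fin m,
        ‖(∫ z, (ζ l : X × Y → ℂ) z * (T (η l) : X × Y → ℂ) z ∂(μ.prod ν)) -
          ∑ i : Fin n,
            (∫ z, ((a i : X → ℂ) z.1 * (b i : Y → ℂ) z.2) * (η l : X × Y → ℂ) z
              ∂(μ.prod ν)) *
            (∫ z, (ζ l : X × Y → ℂ) z * ((c i : X → ℂ) z.1 * (d i : Y → ℂ) z.2)
              ∂(μ.prod ν))‖ < ε := by
  have : ENNReal.HolderConjugate p p' :=
    ENNReal.holderConjugate_iff.2 (by simpa only [one_div] using hpp')
  have : Fact (1 ≤ p') := ⟨ENNReal.HolderConjugate.one_le p' p⟩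
  obtain ⟨n, a, b, c, d, h⟩ := exists_elementaryTensor_sum_eq_integral_mul_apply T ζ η
  exact ⟨n, a, b, c, d, fun l => by rwa [h l, sub_self, norm_zero]⟩

theorem stmt_2 {X Y : Type*} [MeasurableSpace X] [MeasurableSpace Y]
    (μ : Measure X) (ν : Measure Y) [SigmaFinite μ] [SigmaFinite ν]
    (p p' : ℝ≥0∞) [Fact (1 ≤ p)] (hp : 1 < p) (hptop : p ≠ ⊤)
    (hpp' : 1 / p + 1 / p' = 1)
    (T : Lp ℂ p (μ.prod ν) →L[ℂ] Lp ℂ p (μ.prod ν))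
    (ε : ℝ) (hε : 0 < ε) (m : ℕ)
    (ζ : Fin m → Lp ℂ p' (μ.prod ν)) (η : Fin m → Lp ℂ p (μ.prod ν)) :
    ∃ (n : ℕ) (a : Fin n → Lp ℂ p' μ) (b : Fin n → Lp ℂ p' ν)
      (c : Fin n → Lp ℂ p μ) (d : Fin n → Lp ℂ p ν),
      ∀ l : Fin m,
        ‖(∫ z, (ζ l : X × Y → ℂ) z * (T (η l) : X × Y → ℂ) z ∂(μ.prod ν)) -
          ∑ i : Fin n,
            (∫ z, ((a i : X → ℂ) z.1 * (b i : Y → ℂ) z.2) * (η l : X × Y → ℂ) z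
              ∂(μ.prod ν)) *
            (∫ z, (ζ l : X × Y → ℂ) z * ((c i : X → ℂ) z.1 * (d i : Y → ℂ) z.2)
              ∂(μ.prod ν))‖ < ε :=
  stmt_2_general μ ν p p' hpp' T ε hε m ζ η
end

section
/- Let G be a locally compact Hausdorff topological group with left Haar measure μ, N a closed normal subgroup with left Haar measure λ_N, π : G → G/N the quotient homomorphism, and ν a measure on G/N satisfying Weil's formula: for every measurable f : G → [0, ∞] and every measurable g : G/N → [0, ∞] such that g(π(s)) = ∫_N f(s n) dλ_N(n) for every s ∈ G, one has ∫_G f dμ = ∫_{G/N} g dν. Let 1 < p < ∞ with conjugate exponent p′, let K ⊆ G be compact, let f : G → ℂ be continuous with compact support contained in K, and let φ : G → ℝ be continuous with compact support and φ = 1 on K. Let g : G/N → ℂ be a measurable function with g(π(s)) = ∫_N f(s n) dλ_N(n) for every s ∈ G. Then C := sup_{s ∈ G} ( ∫_N |φ(s n)|^p dλ_N(n) )^{1/p} is finite and ( ∫_{G/N} |g|^{p′} dν )^{1/p′} ≤ C · ( ∫_G |f|^{p′} dμ )^{1/p′}. -/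
/-!
Since `φ = 1` on the support of `f`, Hölder's inequality on each coset gives
`|τ_N f| = |τ_N (f φ)| ≤ τ_N(|f|^{p'})^{1/p'} τ_N(|φ|^p)^{1/p} ≤ C τ_N(|f|^{p'})^{1/p'}`,
where `C < ∞` because `φ` is bounded and `{n ∈ N | s n ∈ supp φ}` is a translate of a subset of
the compact set `N ∩ (supp φ)⁻¹ supp φ`. Raising to the power `p'` and integrating over `G ⧸ N`,
Weil's formula turns `∫ τ_N(|f|^{p'}) dν` into `∫ |f|^{p'} dμ`.
-/

open MeasureTheory
open scoped ENNReal Pointwise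

theorem ENNReal.rpow_le_mul_rpow_of_le_rpow_one_div_mul {x y c : ℝ≥0∞} {q : ℝ} (hq : 0 < q)
    (h : x ≤ y ^ (1 / q) * c) : x ^ q ≤ y * c ^ q :=
  calc x ^ q ≤ (y ^ (1 / q) * c) ^ q := ENNReal.rpow_le_rpow h hq.le
    _ = y * c ^ q := by
      rw [ENNReal.mul_rpow_of_nonneg _ _ hq.le, one_div, ENNReal.rpow_inv_rpow hq.ne']

theorem eLpNorm_le_mul_eLpNorm_of_lintegral_rpow_le {α β E F : Type*} [MeasurableSpace α]
    [MeasurableSpace β] [TopologicalSpace E] [ENorm E] [TopologicalSpace F] [ENorm F]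
    {μ : Measure α} {ν : Measure β} {q : ℝ≥0∞} (hq0 : q ≠ 0) (hqtop : q ≠ ⊤) {f : α → E}
    {g : β → F} {c : ℝ≥0∞}
    (h : ∫⁻ y, ‖g y‖ₑ ^ q.toReal ∂ν ≤ c ^ q.toReal * ∫⁻ x, ‖f x‖ₑ ^ q.toReal ∂μ) :
    eLpNorm g q ν ≤ c * eLpNorm f q μ := by
  have hq : 0 < q.toReal := ENNReal.toReal_pos hq0 hqtop
  rw [eLpNorm_eq_lintegral_rpow_enorm_toReal hq0 hqtop,
    eLpNorm_eq_lintegral_rpow_enorm_toReal hq0 hqtop]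
  calc (∫⁻ y, ‖g y‖ₑ ^ q.toReal ∂ν) ^ (1 / q.toReal)
      ≤ (c ^ q.toReal * ∫⁻ x, ‖f x‖ₑ ^ q.toReal ∂μ) ^ (1 / q.toReal) :=
        ENNReal.rpow_le_rpow h (by positivity)
    _ = c * (∫⁻ x, ‖f x‖ₑ ^ q.toReal ∂μ) ^ (1 / q.toReal) := by
        rw [ENNReal.mul_rpow_of_nonneg _ _ (by positivity), one_div, ENNReal.rpow_rpow_inv hq.ne']

theorem enorm_integral_le_of_eq_one_on_support {α E : Type*} [MeasurableSpace α] {μ : Measure α}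
    [NormedAddCommGroup E] [NormedSpace ℝ E] {p q : ℝ} (hpq : p.HolderConjugate q)
    {f : α → E} {φ : α → ℝ} (hf : AEStronglyMeasurable f μ) (hφ : AEMeasurable φ μ)
    (hφf : ∀ x ∈ Function.support f, φ x = 1) :
    ‖∫ x, f x ∂μ‖ₑ ≤
      (∫⁻ x, ‖f x‖ₑ ^ q ∂μ) ^ (1 / q) * (∫⁻ x, ENNReal.ofReal (|φ x| ^ p) ∂μ) ^ (1 / p) := by
  have hfφ (x : α) : ‖f x‖ₑ = ‖f x‖ₑ * ‖φ x‖ₑ := by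
    by_cases hx : f x = 0
    · simp [hx]
    · simp [hφf x hx]
  calc ‖∫ x, f x ∂μ‖ₑ ≤ ∫⁻ x, ‖f x‖ₑ ∂μ := enorm_integral_le_lintegral_enorm _
    _ = ∫⁻ x, ‖f x‖ₑ * ‖φ x‖ₑ ∂μ := lintegral_congr hfφ
    _ ≤ (∫⁻ x, ‖f x‖ₑ ^ q ∂μ) ^ (1 / q) * (∫⁻ x, ‖φ x‖ₑ ^ p ∂μ) ^ (1 / p) :=
        ENNReal.lintegral_mul_le_Lp_mul_Lq μ hpq.symm hf.enorm hφ.enorm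
    _ = _ := by
        simp_rw [Real.enorm_eq_ofReal_abs, ENNReal.ofReal_rpow_of_nonneg (abs_nonneg _) hpq.nonneg]

section CosetIntegral

variable {G : Type*} [Group G] [TopologicalSpace G] [IsTopologicalGroup G] {N : Subgroup G}

theorem HasCompactSupport.comp_mul_coe {E : Type*} [Zero E] {u : G → E}
    (hN : IsClosed (N : Set G)) (hu : HasCompactSupport u) (s : G) :
    HasCompactSupport fun n : N => u (s * n) :=
  (hu.comp_homeomorph (Homeomorph.mulLeft s)).comp_isClosedEmbedding
    hN.isClosedEmbedding_subtypeVal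

variable [MeasurableSpace G] [BorelSpace G]

theorem continuous_integral_comp_mul_coe [LocallyCompactSpace G] (lam : Measure N)
    [IsFiniteMeasureOnCompacts lam] {E : Type*} [NormedAddCommGroup E] [NormedSpace ℝ E]
    (hN : IsClosed (N : Set G)) {u : G → E} (hu : Continuous u) (hu' : HasCompactSupport u) :
    Continuous fun s : G => ∫ n, u (s * n) ∂lam := by
  refine continuous_iff_continuousAt.2 fun s₀ => ?_
  obtain ⟨V, hV, hVs₀⟩ := exists_compact_mem_nhds s₀
  refine ContinuousOn.continuousAt ?_ hVs₀
  refine continuousOn_integral_of_compact_support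
    (hN.isClosedEmbedding_subtypeVal.isCompact_preimage (hV.inv.mul hu'))
    (hu.comp (continuous_fst.mul (continuous_subtype_val.comp continuous_snd))).continuousOn
    fun s n hs hn => image_eq_zero_of_notMem_tsupport fun hsn => hn ?_
  simpa using Set.mul_mem_mul (Set.inv_mem_inv.2 hs) hsn

/-- The averaging map `τ_N` of the paper, as a function on `G` constant on the cosets `sN`. -/
noncomputable def cosetLIntegral (lam : Measure N) (h : G → ℝ≥0∞) (s : G) : ℝ≥0∞ :=
  ∫⁻ n, h (s * n) ∂lam

variable (lam : Measure N)

theorem cosetLIntegral_mul_coe [lam.IsMulLeftInvariant] (h : G → ℝ≥0∞) (s : G) (n : N) :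
    cosetLIntegral lam h (s * n) = cosetLIntegral lam h s := by
  simpa [cosetLIntegral, mul_assoc] using lintegral_mul_left_eq_self (fun m : N => h (s * m)) n

theorem measure_setOf_mul_coe_mem_le [lam.IsMulLeftInvariant] (S : Set G) (s : G) :
    lam {n : N | s * n ∈ S} ≤ lam (Subtype.val ⁻¹' (S⁻¹ * S)) := by
  rcases Set.eq_empty_or_nonempty {n : N | s * n ∈ S} with h | ⟨n₀, hn₀⟩
  · simp [h]
  calc lam {n : N | s * n ∈ S} ≤ lam ((n₀⁻¹ * ·) ⁻¹' (Subtype.val ⁻¹' (S⁻¹ * S))) := by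
        refine measure_mono fun n (hn : s * n ∈ S) => ?_
        have h : ((n₀⁻¹ * n : N) : G) = (s * n₀)⁻¹ * (s * n) := by push_cast; group
        show ((n₀⁻¹ * n : N) : G) ∈ S⁻¹ * S
        rw [h]
        exact Set.mul_mem_mul (Set.inv_mem_inv.2 hn₀) hn
    _ = lam (Subtype.val ⁻¹' (S⁻¹ * S)) := measure_preimage_mul lam _ _

theorem iSup_cosetLIntegral_rpow_ne_top (hN : IsClosed (N : Set G)) [lam.IsMulLeftInvariant]
    [IsFiniteMeasureOnCompacts lam] {φ : G → ℝ} (hφ : Continuous φ) (hφ' : HasCompactSupport φ)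
    {r : ℝ} (hr : 0 < r) :
    ⨆ s, cosetLIntegral lam (fun x => ENNReal.ofReal (|φ x| ^ r)) s ^ (1 / r) ≠ ⊤ := by
  obtain ⟨M, hM⟩ := hφ'.exists_bound_of_continuous hφ
  set R : Set N := Subtype.val ⁻¹' ((tsupport φ)⁻¹ * tsupport φ)
  have hR : lam R ≠ ⊤ :=
    (hN.isClosedEmbedding_subtypeVal.isCompact_preimage (hφ'.inv.mul hφ')).measure_ne_top
  have hbound (s : G) :
      cosetLIntegral lam (fun x => ENNReal.ofReal (|φ x| ^ r)) s ≤
        ENNReal.ofReal (M ^ r) * lam R := by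
    set T : Set N := {n | s * n ∈ tsupport φ}
    have hle (n : N) :
        ENNReal.ofReal (|φ (s * n)| ^ r) ≤ T.indicator (fun _ => ENNReal.ofReal (M ^ r)) n := by
      by_cases hn : n ∈ T
      · rw [Set.indicator_of_mem hn]
        exact ENNReal.ofReal_le_ofReal
          (Real.rpow_le_rpow (abs_nonneg _) (by simpa using hM _) hr.le)
      · simp [Set.indicator_of_notMem hn,
          image_eq_zero_of_notMem_tsupport (hn : s * n ∉ tsupport φ), Real.zero_rpow hr.ne']
    calc cosetLIntegral lam (fun x => ENNReal.ofReal (|φ x| ^ r)) s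
        ≤ ∫⁻ n, T.indicator (fun _ => ENNReal.ofReal (M ^ r)) n ∂lam := lintegral_mono hle
      _ ≤ ENNReal.ofReal (M ^ r) * lam T := lintegral_indicator_const_le _ _
      _ ≤ ENNReal.ofReal (M ^ r) * lam R :=
          mul_le_mul_right (measure_setOf_mul_coe_mem_le lam _ s) _
  have hfin : (ENNReal.ofReal (M ^ r) * lam R) ^ (1 / r) ≠ ⊤ :=
    ENNReal.rpow_ne_top_of_nonneg (by positivity) (ENNReal.mul_ne_top ENNReal.ofReal_ne_top hR)
  exact ne_top_of_le_ne_top hfin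
    (iSup_le fun s => ENNReal.rpow_le_rpow (hbound s) (by positivity))

theorem cosetLIntegral_enorm_rpow_eq_ofReal_integral (hN : IsClosed (N : Set G))
    [IsFiniteMeasureOnCompacts lam] {E : Type*} [NormedAddCommGroup E] {f : G → E}
    (hf : Continuous f) (hf' : HasCompactSupport f) {q : ℝ} (hq : 0 < q) (s : G) :
    cosetLIntegral lam (fun x => ‖f x‖ₑ ^ q) s = ENNReal.ofReal (∫ n, ‖f (s * n)‖ ^ q ∂lam) := by
  have hu : Continuous fun x => ‖f x‖ ^ q := hf.norm.rpow_const fun _ => Or.inr hq.le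
  have hu' : HasCompactSupport fun x => ‖f x‖ ^ q :=
    hf'.norm.comp_left (g := (· ^ q)) (Real.zero_rpow hq.ne')
  have hun : Continuous fun n : N => ‖f (s * n)‖ ^ q :=
    hu.comp (continuous_const.mul continuous_subtype_val)
  rw [ofReal_integral_eq_lintegral_ofReal (hun.integrable_of_hasCompactSupport
      (hu'.comp_mul_coe hN s))
    (Filter.Eventually.of_forall fun _ => by positivity)]
  refine lintegral_congr fun n => ?_
  rw [← ENNReal.ofReal_rpow_of_nonneg (norm_nonneg _) hq.le, ofReal_norm]

theorem measurable_cosetLIntegral_enorm_rpow [LocallyCompactSpace G] (hN : IsClosed (N : Set G))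
    [IsFiniteMeasureOnCompacts lam] {E : Type*} [NormedAddCommGroup E] {f : G → E}
    (hf : Continuous f) (hf' : HasCompactSupport f) {q : ℝ} (hq : 0 < q) :
    Measurable (cosetLIntegral lam fun x => ‖f x‖ₑ ^ q) := by
  have hu' : HasCompactSupport fun x => ‖f x‖ ^ q :=
    hf'.norm.comp_left (g := (· ^ q)) (Real.zero_rpow hq.ne')
  simp_rw [funext (cosetLIntegral_enorm_rpow_eq_ofReal_integral lam hN hf hf' hq)]
  exact ENNReal.measurable_ofReal.comp (continuous_integral_comp_mul_coe lam hN
    (hf.norm.rpow_const fun _ => Or.inr hq.le) hu').measurable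

def WeilFormula [MeasurableSpace (G ⧸ N)] (μ : Measure G) (ν : Measure (G ⧸ N)) : Prop :=
  ∀ f : G → ℝ≥0∞, Measurable f → ∀ g : G ⧸ N → ℝ≥0∞, Measurable g →
    (∀ s : G, g (QuotientGroup.mk s) = cosetLIntegral lam f s) → ∫⁻ x, f x ∂μ = ∫⁻ y, g y ∂ν

/-- The σ-algebra on `G ⧸ N` is arbitrary, so `τ_N h` need not descend to a measurable function
there; instead Weil's formula is applied to `(b ∘ π) · h / τ_N h`, whose coset integral is
`b ∘ π`. -/
theorem lintegral_le_mul_lintegral_of_le_cosetLIntegral_mul [MeasurableSpace (G ⧸ N)]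
    [lam.IsMulLeftInvariant] {μ : Measure G} {ν : Measure (G ⧸ N)} (hWeil : WeilFormula lam μ ν)
    {h : G → ℝ≥0∞} (hh : Measurable h) (ha : Measurable (cosetLIntegral lam h))
    (ha' : ∀ s, cosetLIntegral lam h s ≠ ⊤) {b : G ⧸ N → ℝ≥0∞} (hb : Measurable b)
    (hb' : Measurable fun s => b (QuotientGroup.mk s)) {c : ℝ≥0∞}
    (hbc : ∀ s, b (QuotientGroup.mk s) ≤ cosetLIntegral lam h s * c) :
    ∫⁻ y, b y ∂ν ≤ c * ∫⁻ x, h x ∂μ := by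
  set a := cosetLIntegral lam h
  have hh_mul (s : G) : Measurable fun n : N => h (s * n) :=
    hh.comp (continuous_const.mul continuous_subtype_val).measurable
  have hF (s : G) : b (QuotientGroup.mk s) =
      cosetLIntegral lam (fun x => b (QuotientGroup.mk x) * (h x / a x)) s := by
    have hmk (n : N) : (QuotientGroup.mk (s * n) : G ⧸ N) = QuotientGroup.mk s :=
      QuotientGroup.mk_mul_of_mem s n.2
    have ha_mul (n : N) : a (s * n) = a s := cosetLIntegral_mul_coe lam h s n
    calc b (QuotientGroup.mk s) = b (QuotientGroup.mk s) * (a s * (a s)⁻¹) := by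
          rcases eq_or_ne (a s) 0 with h0 | h0
          · simpa [h0] using hbc s
          · rw [ENNReal.mul_inv_cancel h0 (ha' s), mul_one]
      _ = ∫⁻ n, b (QuotientGroup.mk s) * (h (s * n) * (a s)⁻¹) ∂lam := by
          rw [lintegral_const_mul _ ((hh_mul s).mul_const _), lintegral_mul_const _ (hh_mul s)]
          rfl
      _ = cosetLIntegral lam (fun x => b (QuotientGroup.mk x) * (h x / a x)) s :=
          lintegral_congr fun n => by dsimp only; rw [hmk, ha_mul, div_eq_mul_inv]
  calc ∫⁻ y, b y ∂ν = ∫⁻ x, b (QuotientGroup.mk x) * (h x / a x) ∂μ :=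
        (hWeil _ (hb'.mul (hh.div ha)) b hb hF).symm
    _ ≤ ∫⁻ x, c * h x ∂μ := lintegral_mono fun x =>
        calc b (QuotientGroup.mk x) * (h x / a x) ≤ a x * c * (h x / a x) := by gcongr; exact hbc x
          _ = c * (a x * (h x / a x)) := by ring
          _ ≤ c * h x := by gcongr; exact ENNReal.mul_div_le
    _ = c * ∫⁻ x, h x ∂μ := lintegral_const_mul c hh

end CosetIntegral

theorem stmt_11_general {G : Type*} [Group G] [TopologicalSpace G] [IsTopologicalGroup G]
    [LocallyCompactSpace G] [MeasurableSpace G] [BorelSpace G]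
    (N : Subgroup G) (hNc : IsClosed (N : Set G))
    [MeasurableSpace (G ⧸ N)]
    (μ : Measure G)
    (lamN : Measure ↥N) [lamN.IsHaarMeasure]
    (ν : Measure (G ⧸ N))
    (hWeil : ∀ f : G → ℝ≥0∞, Measurable f → ∀ g : G ⧸ N → ℝ≥0∞, Measurable g →
      (∀ s : G, g (QuotientGroup.mk s) = ∫⁻ n : ↥N, f (s * ↑n) ∂lamN) →
      ∫⁻ x, f x ∂μ = ∫⁻ y, g y ∂ν)
    (p p' : ℝ≥0∞) (hp : 1 < p) (hptop : p ≠ ⊤) (hpp' : 1 / p + 1 / p' = 1)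
    (K : Set G) (hKcomp : IsCompact K)
    (f : G → ℂ) (hfc : Continuous f) (hfsupp : Function.support f ⊆ K)
    (φ : G → ℝ) (hφc : Continuous φ) (hφsupp : HasCompactSupport φ)
    (hφ1 : ∀ x ∈ K, φ x = 1)
    (g : G ⧸ N → ℂ) (hgm : Measurable g)
    (hg : ∀ s : G, g (QuotientGroup.mk s) = ∫ n : ↥N, f (s * ↑n) ∂lamN) :
    (⨆ s : G, (∫⁻ n : ↥N, ENNReal.ofReal (|φ (s * ↑n)| ^ p.toReal) ∂lamN)
        ^ (1 / p.toReal)) ≠ ⊤ ∧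
    eLpNorm g p' ν ≤
      (⨆ s : G, (∫⁻ n : ↥N, ENNReal.ofReal (|φ (s * ↑n)| ^ p.toReal) ∂lamN)
        ^ (1 / p.toReal)) * eLpNorm f p' μ := by
  have hpq : p.HolderConjugate p' :=
    ENNReal.holderConjugate_iff.2 (by simpa only [one_div] using hpp')
  have hp'0 : p' ≠ 0 := (ENNReal.HolderConjugate.pos p' p).ne'
  have hp'top : p' ≠ ⊤ := (ENNReal.HolderConjugate.ne_top_iff_ne_one p' p).2 hp.ne'
  have hr : p.toReal.HolderConjugate p'.toReal :=
    ENNReal.HolderConjugate.toReal_of_ne_top hptop hp'top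
  have hC := iSup_cosetLIntegral_rpow_ne_top lamN hNc hφc hφsupp hr.pos
  set C := ⨆ s : G, (∫⁻ n : ↥N, ENNReal.ofReal (|φ (s * ↑n)| ^ p.toReal) ∂lamN) ^ (1 / p.toReal)
  have hf : HasCompactSupport f :=
    .intro hKcomp fun x hx => Function.notMem_support.1 (mt (@hfsupp x) hx)
  have hfN (s : G) : Continuous fun n : N => f (s * n) :=
    hfc.comp (continuous_const.mul continuous_subtype_val)
  have hgC (s : G) : ‖g (QuotientGroup.mk s)‖ₑ ≤
      cosetLIntegral lamN (fun x => ‖f x‖ₑ ^ p'.toReal) s ^ (1 / p'.toReal) * C := by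
    rw [hg s]
    refine (enorm_integral_le_of_eq_one_on_support hr (hfN s).aestronglyMeasurable
      (hφc.comp (continuous_const.mul continuous_subtype_val)).aemeasurable
      fun n hn => hφ1 _ (hfsupp hn)).trans ?_
    exact mul_le_mul_right (le_iSup (α := ℝ≥0∞) _ s) _
  refine ⟨hC, eLpNorm_le_mul_eLpNorm_of_lintegral_rpow_le hp'0 hp'top ?_⟩
  refine lintegral_le_mul_lintegral_of_le_cosetLIntegral_mul lamN hWeil
    (hfc.measurable.enorm.pow_const _)
    (measurable_cosetLIntegral_enorm_rpow lamN hNc hfc hf hr.symm.pos)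
    (fun s => (cosetLIntegral_enorm_rpow_eq_ofReal_integral lamN hNc hfc hf hr.symm.pos s).trans_ne
      ENNReal.ofReal_ne_top)
    (hgm.enorm.pow_const _) ?_
    fun s => ENNReal.rpow_le_mul_rpow_of_le_rpow_one_div_mul hr.symm.pos (hgC s)
  simp_rw [hg]
  exact (continuous_integral_comp_mul_coe lamN hNc hfc hf).measurable.enorm.pow_const _

theorem stmt_11 {G : Type*} [Group G] [TopologicalSpace G] [IsTopologicalGroup G]
    [LocallyCompactSpace G] [T2Space G] [MeasurableSpace G] [BorelSpace G]
    (N : Subgroup G) [N.Normal] (hNc : IsClosed (N : Set G))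
    [MeasurableSpace (G ⧸ N)]
    (μ : Measure G) [μ.IsHaarMeasure]
    (lamN : Measure ↥N) [lamN.IsHaarMeasure]
    (ν : Measure (G ⧸ N))
    (hWeil : ∀ f : G → ℝ≥0∞, Measurable f → ∀ g : G ⧸ N → ℝ≥0∞, Measurable g →
      (∀ s : G, g (QuotientGroup.mk s) = ∫⁻ n : ↥N, f (s * ↑n) ∂lamN) →
      ∫⁻ x, f x ∂μ = ∫⁻ y, g y ∂ν)
    (p p' : ℝ≥0∞) (hp : 1 < p) (hptop : p ≠ ⊤) (hpp' : 1 / p + 1 / p' = 1)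
    (K : Set G) (hKcomp : IsCompact K)
    (f : G → ℂ) (hfc : Continuous f) (hfsupp : Function.support f ⊆ K)
    (φ : G → ℝ) (hφc : Continuous φ) (hφsupp : HasCompactSupport φ)
    (hφ1 : ∀ x ∈ K, φ x = 1)
    (g : G ⧸ N → ℂ) (hgm : Measurable g)
    (hg : ∀ s : G, g (QuotientGroup.mk s) = ∫ n : ↥N, f (s * ↑n) ∂lamN) :
    (⨆ s : G, (∫⁻ n : ↥N, ENNReal.ofReal (|φ (s * ↑n)| ^ p.toReal) ∂lamN)
        ^ (1 / p.toReal)) ≠ ⊤ ∧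
    eLpNorm g p' ν ≤
      (⨆ s : G, (∫⁻ n : ↥N, ENNReal.ofReal (|φ (s * ↑n)| ^ p.toReal) ∂lamN)
        ^ (1 / p.toReal)) * eLpNorm f p' μ :=
  stmt_11_general N hNc μ lamN ν hWeil p p' hp hptop hpp' K hKcomp f hfc hfsupp φ hφc hφsupp hφ1 g
    hgm hg
end

section
/- Let G be a locally compact Hausdorff topological group, H a closed subgroup with left Haar measure λ_H, q : G → (0, ∞) a continuous function, and 1 < p < ∞ with conjugate exponent p′. Let T be a bounded linear operator on L^p(H, λ_H) which commutes with every left translation λ_p^H(h), h ∈ H (where λ_p^H(h) f(k) = f(h^{-1} k)). For φ, ψ : G → ℂ continuous with compact support and x ∈ G, let φ_x, ψ_x ∈ C_c(H) be given by φ_x(h) = φ(x h) q(x h)^{-1/p} and ψ_x(h) = ψ(x h) q(x h)^{-1/p′}, and set F(x) = ∫_H ψ_x(h) · (T φ_x)(h) dλ_H(h). Then F(x h_0) = F(x) for every x ∈ G and every h_0 ∈ H; that is, F is constant on left cosets x H. -/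
/-! The function `v` is the left translate of `u` by `h₀`, so, `T` commuting with left
translations, `T v` is the left translate of `T u`; the same translation appears in the `ψ`
factor, and left invariance of the Haar measure absorbs it in the integral. -/

open MeasureTheory
open scoped ENNReal

section LeftTranslation

variable {M : Type*} [Group M] [MeasurableSpace M] [MeasurableMul M]
  {μ : Measure M} [μ.IsMulLeftInvariant]

theorem ae_eq_comp_mul_left {E : Type*} {f g : M → E} (a : M) (hfg : f =ᵐ[μ] g) :
    (fun k => f (a * k)) =ᵐ[μ] fun k => g (a * k) :=
  (measurePreserving_mul_left μ a).quasiMeasurePreserving.ae_eq_comp hfg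

theorem integral_mul_of_ae_eq_comp_mul_left {ψ F F' : M → ℂ} (a : M)
    (hF' : F' =ᵐ[μ] fun k => F (a * k)) :
    ∫ k, ψ (a * k) * F' k ∂μ = ∫ k, ψ k * F k ∂μ := by
  calc ∫ k, ψ (a * k) * F' k ∂μ = ∫ k, (fun k => ψ k * F k) (a * k) ∂μ :=
        integral_congr_ae (hF'.mono fun k hk => by simp only [hk])
    _ = ∫ k, ψ k * F k ∂μ := integral_mul_left_eq_self (fun k => ψ k * F k) a

end LeftTranslation

theorem stmt_12_general {G : Type*} [Group G] [TopologicalSpace G] [IsTopologicalGroup G]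
    [MeasurableSpace G] [BorelSpace G]
    (H : Subgroup G)
    (lamH : Measure ↥H) [lamH.IsHaarMeasure]
    (q : G → ℝ)
    (p p' : ℝ≥0∞) [Fact (1 ≤ p)]
    (T : Lp ℂ p lamH →L[ℂ] Lp ℂ p lamH)
    (hT : ∀ (h : ↥H) (u v : Lp ℂ p lamH),
      ((v : ↥H → ℂ) =ᵐ[lamH] fun k => u (h⁻¹ * k)) →
      ((T v : ↥H → ℂ) =ᵐ[lamH] fun k => T u (h⁻¹ * k)))
    (φ ψ : G → ℂ)
    (x : G) (h₀ : ↥H)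
    (u v : Lp ℂ p lamH)
    (hu : (u : ↥H → ℂ) =ᵐ[lamH]
      fun h => φ (x * ↑h) * ((q (x * ↑h) ^ (-(1 / p.toReal)) : ℝ) : ℂ))
    (hv : (v : ↥H → ℂ) =ᵐ[lamH]
      fun h => φ (x * ↑h₀ * ↑h) * ((q (x * ↑h₀ * ↑h) ^ (-(1 / p.toReal)) : ℝ) : ℂ)) :
    (∫ h : ↥H, ψ (x * ↑h₀ * ↑h) * ((q (x * ↑h₀ * ↑h) ^ (-(1 / p'.toReal)) : ℝ) : ℂ) *
        (T v) h ∂lamH) =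
      ∫ h : ↥H, ψ (x * ↑h) * ((q (x * ↑h) ^ (-(1 / p'.toReal)) : ℝ) : ℂ) *
        (T u) h ∂lamH := by
  have : BorelSpace ↥H := Subtype.borelSpace (H : Set G)
  have hu' : (fun k => u (h₀ * k)) =ᵐ[lamH]
      fun k => φ (x * ↑h₀ * ↑k) * ((q (x * ↑h₀ * ↑k) ^ (-(1 / p.toReal)) : ℝ) : ℂ) := by
    simpa only [Subgroup.coe_mul, mul_assoc] using ae_eq_comp_mul_left h₀ hu
  have hTvu : (T v : ↥H → ℂ) =ᵐ[lamH] fun k => T u (h₀ * k) := by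
    simpa only [inv_inv] using hT h₀⁻¹ u v (by simpa only [inv_inv] using hv.trans hu'.symm)
  simpa only [Subgroup.coe_mul, mul_assoc] using
    integral_mul_of_ae_eq_comp_mul_left
      (ψ := fun k : ↥H => ψ (x * ↑k) * ((q (x * ↑k) ^ (-(1 / p'.toReal)) : ℝ) : ℂ)) h₀ hTvu

theorem stmt_12 {G : Type*} [Group G] [TopologicalSpace G] [IsTopologicalGroup G]
    [LocallyCompactSpace G] [T2Space G] [MeasurableSpace G] [BorelSpace G]
    (H : Subgroup G) (hHc : IsClosed (H : Set G))
    (lamH : Measure ↥H) [lamH.IsHaarMeasure]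
    (q : G → ℝ) (hqc : Continuous q) (hqpos : ∀ x, 0 < q x)
    (p p' : ℝ≥0∞) [Fact (1 ≤ p)] (hp : 1 < p) (hptop : p ≠ ⊤)
    (hpp' : 1 / p + 1 / p' = 1)
    (T : Lp ℂ p lamH →L[ℂ] Lp ℂ p lamH)
    (hT : ∀ (h : ↥H) (u v : Lp ℂ p lamH),
      ((v : ↥H → ℂ) =ᵐ[lamH] fun k => u (h⁻¹ * k)) →
      ((T v : ↥H → ℂ) =ᵐ[lamH] fun k => T u (h⁻¹ * k)))
    (φ ψ : G → ℂ) (hφc : Continuous φ) (hφs : HasCompactSupport φ)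
    (hψc : Continuous ψ) (hψs : HasCompactSupport ψ)
    (x : G) (h₀ : ↥H)
    (u v : Lp ℂ p lamH)
    (hu : (u : ↥H → ℂ) =ᵐ[lamH]
      fun h => φ (x * ↑h) * ((q (x * ↑h) ^ (-(1 / p.toReal)) : ℝ) : ℂ))
    (hv : (v : ↥H → ℂ) =ᵐ[lamH]
      fun h => φ (x * ↑h₀ * ↑h) * ((q (x * ↑h₀ * ↑h) ^ (-(1 / p.toReal)) : ℝ) : ℂ)) :
    (∫ h : ↥H, ψ (x * ↑h₀ * ↑h) * ((q (x * ↑h₀ * ↑h) ^ (-(1 / p'.toReal)) : ℝ) : ℂ) *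
        (T v) h ∂lamH) =
      ∫ h : ↥H, ψ (x * ↑h) * ((q (x * ↑h) ^ (-(1 / p'.toReal)) : ℝ) : ℂ) *
        (T u) h ∂lamH :=
  stmt_12_general H lamH q p p' T hT φ ψ x h₀ u v hu hv
end
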